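/- Invariance Lemma (the multi-step inverse model is invariant to exogenous information): for every exo-free policy π : S → PMF A, every initial distribution μ0 : PMF Z, every k ≥ 1, all observations x, x' ∈ X and every action a ∈ A, if Σ_{a''∈A} μ^k(x, a'', x') > 0, then μ^k(x, a, x') / Σ_{a''∈A} μ^k(x, a'', x') = [π(φ⋆(x))(a) * Ps^k(φ⋆(x), a)(φ⋆(x'))] / [Σ_{a''∈A} π(φ⋆(x))(a'') * Ps^k(φ⋆(x), a'')(φ⋆(x'))]. In particular, the conditional probability P_π(a_t = a | x_t = x, x_{t+k} = x') depends on the observations only through their controller representations (φ⋆(x), φ⋆(x')). -/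

import Mathlib

open scoped ENNReal BigOperators

/-- The `k`-step controller kernel (index `k : ℕ` represents `k+1` steps). -/
noncomputable def Psk {S A : Type*} (Ts : S → A → PMF S) (π : S → PMF A) :
    ℕ → S → A → PMF S
  | 0 => Ts
  | k + 1 => fun s a => (Ts s a).bind fun s1 => (π s1).bind fun a1 => Psk Ts π k s1 a1

/-- The `k`-step exogenous kernel (index `k : ℕ` represents `k+1` steps). -/
noncomputable def Tek {E : Type*} (Te : E → PMF E) : ℕ → E → PMF E
  | 0 => Te
  | k + 1 => fun e => (Te e).bind (Tek Te k)

/-- The `k`-step joint kernel (index `k : ℕ` represents `k+1` steps). -/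
noncomputable def Pzk {S E A : Type*} (T : S × E → A → PMF (S × E)) (π : S → PMF A) :
    ℕ → S × E → A → PMF (S × E)
  | 0 => T
  | k + 1 => fun z a => (T z a).bind fun z1 => (π z1.1).bind fun a1 => Pzk T π k z1 a1

/-- The joint PMF `μ^k` on `X × A × X` of the triple `(x_t, a_t, x_{t+k})`:
sample `z ~ μ0`, `x ~ q z`, `a ~ π (φ⋆ x)`, `z' ~ Pzk T π k z a`, `x' ~ q z'`. -/
noncomputable def muk {S E A X : Type*} (T : S × E → A → PMF (S × E)) (π : S → PMF A)
    (q : S × E → PMF X) (ψ : X → S × E) (μ0 : PMF (S × E)) (k : ℕ) :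
    PMF (X × A × X) :=
  μ0.bind fun z => (q z).bind fun x => (π (ψ x).1).bind fun a =>
    (Pzk T π k z a).bind fun z' => (q z').map fun x' => (x, a, x')

/-
Under the factorized dynamics the joint `k`-step kernel splits as `Pz^k = Ps^k ⊗ Te^k`, and
since an observation determines the latent state that emitted it, `μ^k(x, a, x')` only involves
the decoded states `ψ x`, `ψ x'`. Hence `μ^k(x, a, x') = C · π(φ⋆ x)(a) · Ps^k(φ⋆ x, a)(φ⋆ x')`,
where the factor `C` collects `μ0`, the emissions and the exogenous kernel and does not depend
on `a`; it cancels from the normalized ratio.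
-/

open PMF

theorem Pzk_apply_eq_Psk_mul_Tek {S E A : Type*} (Ts : S → A → PMF S) (Te : E → PMF E)
    (T : S × E → A → PMF (S × E))
    (hT : ∀ (s : S) (e : E) (a : A) (s' : S) (e' : E), T (s, e) a (s', e') = Ts s a s' * Te e e')
    (π : S → PMF A) (k : ℕ) (z : S × E) (a : A) (z' : S × E) :
    Pzk T π k z a z' = Psk Ts π k z.1 a z'.1 * Tek Te k z.2 z'.2 := by
  induction k generalizing z a with
  | zero => exact hT z.1 z.2 a z'.1 z'.2
  | succ k ih =>
    calc Pzk T π (k + 1) z a z'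
        = ∑' (s1 : S) (e1 : E), (Ts z.1 a s1 * ∑' a1, π s1 a1 * Psk Ts π k s1 a1 z'.1) *
            (Te z.2 e1 * Tek Te k e1 z'.2) := by
          simp only [Pzk, bind_apply, ih, ENNReal.tsum_prod', hT]
          refine tsum_congr fun s1 => tsum_congr fun e1 => ?_
          simp only [← mul_assoc, ENNReal.tsum_mul_right]
          ring
      _ = (∑' s1, Ts z.1 a s1 * ∑' a1, π s1 a1 * Psk Ts π k s1 a1 z'.1) *
            ∑' e1, Te z.2 e1 * Tek Te k e1 z'.2 := by
          simp only [ENNReal.tsum_mul_left, ENNReal.tsum_mul_right]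
      _ = Psk Ts π (k + 1) z.1 a z'.1 * Tek Te (k + 1) z.2 z'.2 := by
          simp only [Psk, Tek, bind_apply]

theorem PMF.map_prodMk_apply {α β : Type*} [DecidableEq α] (p : PMF β) (a a' : α) (b : β) :
    p.map (Prod.mk a') (a, b) = if a' = a then p b else 0 := by
  rw [map_apply, tsum_eq_single b fun b' hb' => by simp [hb'.symm]]
  by_cases h : a' = a <;> simp [h, Ne.symm]

theorem muk_apply_eq_tsum {S E A X : Type*} (T : S × E → A → PMF (S × E)) (π : S → PMF A)
    (q : S × E → PMF X) (ψ : X → S × E) (μ0 : PMF (S × E)) (k : ℕ) (x x' : X) (a : A) :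
    muk T π q ψ μ0 k (x, a, x') =
      ∑' z, μ0 z * (q z x * (π (ψ x).1 a * (Pzk T π k z a).bind q x')) := by
  classical
  have hmap (x0 : X) (a0 : A) (p : PMF X) : p.map (fun x'' => (x0, a0, x'')) (x, a, x') =
      if a0 = a then if x0 = x then p x' else 0 else 0 := by
    change p.map (Prod.mk x0 ∘ Prod.mk a0) _ = _
    rw [← map_comp, PMF.map_prodMk_apply, PMF.map_prodMk_apply]
    split_ifs <;> rfl
  simp only [muk, ← map_bind, bind_apply _ _ (x, a, x'), hmap, mul_ite, mul_zero, tsum_ite_eq]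

theorem apply_eq_zero_of_ne_decode {Z X : Type*} {q : Z → PMF X} {ψ : X → Z}
    (hψ : ∀ (z : Z) (x : X), x ∈ (q z).support → ψ x = z) {z : Z} {x : X} (hz : z ≠ ψ x) :
    q z x = 0 :=
  (apply_eq_zero_iff _ _).2 fun hx => hz (hψ z x hx).symm

theorem muk_apply_eq_mul {S E A X : Type*} (Ts : S → A → PMF S) (Te : E → PMF E)
    (T : S × E → A → PMF (S × E))
    (hT : ∀ (s : S) (e : E) (a : A) (s' : S) (e' : E), T (s, e) a (s', e') = Ts s a s' * Te e e')
    (π : S → PMF A) (q : S × E → PMF X) (ψ : X → S × E)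
    (hψ : ∀ (z : S × E) (x : X), x ∈ (q z).support → ψ x = z)
    (μ0 : PMF (S × E)) (k : ℕ) (x x' : X) (a : A) :
    muk T π q ψ μ0 k (x, a, x') =
      μ0 (ψ x) * q (ψ x) x * Tek Te k (ψ x).2 (ψ x').2 * q (ψ x') x' *
        (π (ψ x).1 a * Psk Ts π k (ψ x).1 a (ψ x').1) := by
  rw [muk_apply_eq_tsum,
    tsum_eq_single (ψ x) fun z hz => by simp [apply_eq_zero_of_ne_decode hψ hz], bind_apply,
    tsum_eq_single (ψ x') fun z' hz' => by simp [apply_eq_zero_of_ne_decode hψ hz'],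
    Pzk_apply_eq_Psk_mul_Tek Ts Te T hT]
  ring

theorem multi_step_inverse_model_invariance_general
    {S E A X : Type*} [Fintype A]
    (Ts : S → A → PMF S) (Te : E → PMF E)
    (T : S × E → A → PMF (S × E))
    (hT : ∀ (s : S) (e : E) (a : A) (s' : S) (e' : E),
      T (s, e) a (s', e') = Ts s a s' * Te e e')
    (π : S → PMF A)
    (q : S × E → PMF X)
    (ψ : X → S × E)
    (hψ : ∀ (z : S × E) (x : X), x ∈ (q z).support → ψ x = z)
    (μ0 : PMF (S × E)) (k : ℕ) (x x' : X) (a : A)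
    (hpos : 0 < ∑ a'' : A, muk T π q ψ μ0 k (x, a'', x')) :
    (muk T π q ψ μ0 k (x, a, x')) / (∑ a'' : A, muk T π q ψ μ0 k (x, a'', x')) =
      (π (ψ x).1 a * Psk Ts π k (ψ x).1 a (ψ x').1) /
        (∑ a'' : A, π (ψ x).1 a'' * Psk Ts π k (ψ x).1 a'' (ψ x').1) := by
  simp only [muk_apply_eq_mul Ts Te T hT π q ψ hψ, ← Finset.mul_sum] at hpos ⊢
  exact ENNReal.mul_div_mul_left _ _ (left_ne_zero_of_mul hpos.ne')
    (by simp [ENNReal.mul_eq_top, apply_ne_top])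

/-- Invariance Lemma: the multi-step inverse model is invariant to exogenous information.
The conditional probability `P_π(a_t = a | x_t = x, x_{t+k} = x')` depends on the observations
only through their controller representations `(φ⋆ x, φ⋆ x')`, where `φ⋆ x = (ψ x).1`. -/
theorem multi_step_inverse_model_invariance
    {S E A X : Type*} [Fintype S] [Fintype E] [Fintype A] [Fintype X]
    [Nonempty S] [Nonempty E] [Nonempty A] [Nonempty X]
    (Ts : S → A → PMF S) (Te : E → PMF E)
    (T : S × E → A → PMF (S × E))
    (hT : ∀ (s : S) (e : E) (a : A) (s' : S) (e' : E),
      T (s, e) a (s', e') = Ts s a s' * Te e e')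
    (π : S → PMF A)
    (q : S × E → PMF X)
    (hq : ∀ z z' : S × E, z ≠ z' → Disjoint (q z).support (q z').support)
    (ψ : X → S × E)
    (hψ : ∀ (z : S × E) (x : X), x ∈ (q z).support → ψ x = z)
    (μ0 : PMF (S × E)) (k : ℕ) (x x' : X) (a : A)
    (hpos : 0 < ∑ a'' : A, muk T π q ψ μ0 k (x, a'', x')) :
    (muk T π q ψ μ0 k (x, a, x')) / (∑ a'' : A, muk T π q ψ μ0 k (x, a'', x')) =
      (π (ψ x).1 a * Psk Ts π k (ψ x).1 a (ψ x').1) /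
        (∑ a'' : A, π (ψ x).1 a'' * Psk Ts π k (ψ x).1 a'' (ψ x').1) :=
  multi_step_inverse_model_invariance_general Ts Te T hT π q ψ hψ μ0 k x x' a hpos
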